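/- arXiv:2003.10921 — 8 statements merged into one kernel-verified Lean document; each statement's English description precedes it below -/
import Mathlib

section
/- Let a₁, a₂, a₃ ∈ ℂ with |a₁| < 1, and suppose 0 ≤ 1 + 2·Re(a₁ · conj a₂ · a₃) − |a₁|² − |a₂|² − |a₃|². Then |a₂| ≤ 1, |a₃| ≤ 1, and the 3×3 Hermitian matrix N with rows (1, a₁, a₂), (conj a₁, 1, a₃), (conj a₂, conj a₃, 1) is positive semidefinite. -/
/-!
Completing the square in the first coordinate writes the quadratic form of `N(a₁,a₂,a₃)` as
`|x₀ + a₁x₁ + a₂x₂|²` plus the Hermitian form of the Schur complement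
`[[1 - |a₁|², b], [conj b, 1 - |a₂|²]]` with `b = a₃ - conj a₁ · a₂`, and
`det N = (1 - |a₁|²)(1 - |a₂|²) - |b|²`. Since `1 - |a₁|² > 0`, `det N ≥ 0` makes the Schur
complement positive semidefinite and forces `|a₂| ≤ 1`; the same argument with the roles of
`a₂` and `a₃` exchanged gives `|a₃| ≤ 1`.
-/

open scoped ComplexOrder ComplexConjugate Matrix

lemma Matrix.PosSemidef.of_re_dotProduct_mulVec_nonneg {n 𝕜 : Type*} [Fintype n] [RCLike 𝕜]
    {A : Matrix n n 𝕜} (hA : A.IsHermitian) (h : ∀ x, 0 ≤ RCLike.re (star x ⬝ᵥ (A *ᵥ x))) :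
    A.PosSemidef :=
  .of_dotProduct_mulVec_nonneg hA fun x ↦
    RCLike.nonneg_iff.mpr ⟨h x, hA.im_star_dotProduct_mulVec_self x⟩

lemma two_mul_mul_mul_le_of_sq_le_mul {p q c v w : ℝ} (hp : 0 < p) (hc : c ^ 2 ≤ p * q) :
    2 * (c * v * w) ≤ p * v ^ 2 + q * w ^ 2 := by
  refine le_of_mul_le_mul_left ?_ hp
  have hsq : p * (p * v ^ 2 + q * w ^ 2) - p * (2 * (c * v * w))
      = (p * v - c * w) ^ 2 + (p * q - c ^ 2) * w ^ 2 := by ring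
  linarith [sq_nonneg (p * v - c * w), mul_nonneg (sub_nonneg.2 hc) (sq_nonneg w)]

lemma Complex.mul_sq_norm_add_mul_sq_norm_add_two_re_nonneg {p q : ℝ} {b : ℂ} (hp : 0 < p)
    (hb : ‖b‖ ^ 2 ≤ p * q) (v w : ℂ) :
    0 ≤ p * ‖v‖ ^ 2 + q * ‖w‖ ^ 2 + 2 * (conj v * b * w).re := by
  have hre : -(‖b‖ * ‖v‖ * ‖w‖) ≤ (conj v * b * w).re := by
    have habs := Complex.abs_re_le_norm (conj v * b * w)
    rw [norm_mul, norm_mul, Complex.norm_conj] at habs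
    linarith [neg_abs_le (conj v * b * w).re]
  linarith [two_mul_mul_mul_le_of_sq_le_mul (v := ‖v‖) (w := ‖w‖) hp hb]

def corrMatrix (a₁ a₂ a₃ : ℂ) : Matrix (Fin 3) (Fin 3) ℂ :=
  !![1, a₁, a₂; conj a₁, 1, a₃; conj a₂, conj a₃, 1]

/-- `det (corrMatrix a₁ a₂ a₃)`. -/
noncomputable def corrDet (a₁ a₂ a₃ : ℂ) : ℝ :=
  1 + 2 * (a₁ * conj a₂ * a₃).re - ‖a₁‖ ^ 2 - ‖a₂‖ ^ 2 - ‖a₃‖ ^ 2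

section

variable (a₁ a₂ a₃ : ℂ)

lemma corrMatrix_isHermitian : (corrMatrix a₁ a₂ a₃).IsHermitian := by
  ext i j
  fin_cases i <;> fin_cases j <;> simp [corrMatrix]

lemma re_star_dotProduct_corrMatrix_mulVec (x : Fin 3 → ℂ) :
    (star x ⬝ᵥ (corrMatrix a₁ a₂ a₃ *ᵥ x)).re
      = ‖x 0 + a₁ * x 1 + a₂ * x 2‖ ^ 2 + (1 - ‖a₁‖ ^ 2) * ‖x 1‖ ^ 2
        + (1 - ‖a₂‖ ^ 2) * ‖x 2‖ ^ 2 + 2 * (conj (x 1) * (a₃ - conj a₁ * a₂) * x 2).re := by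
  simp only [corrMatrix, dotProduct, Matrix.mulVec, Fin.sum_univ_three, Matrix.of_apply,
    Matrix.cons_val', Matrix.cons_val_fin_one, Matrix.cons_val_zero, Matrix.cons_val_one,
    Matrix.cons_val, Pi.star_apply, RCLike.star_def, Complex.sq_norm, Complex.normSq_apply,
    Complex.add_re, Complex.add_im, Complex.sub_re, Complex.sub_im, Complex.mul_re,
    Complex.mul_im, Complex.conj_re, Complex.conj_im, Complex.one_re, Complex.one_im]
  ring

lemma corrDet_eq :
    corrDet a₁ a₂ a₃ = (1 - ‖a₁‖ ^ 2) * (1 - ‖a₂‖ ^ 2) - ‖a₃ - conj a₁ * a₂‖ ^ 2 := by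
  simp only [corrDet, Complex.sq_norm, Complex.normSq_apply, Complex.mul_re, Complex.mul_im,
    Complex.sub_re, Complex.sub_im, Complex.conj_re, Complex.conj_im]
  ring

lemma corrDet_conj_swap : corrDet (conj a₁) a₃ a₂ = corrDet a₁ a₂ a₃ := by
  simp only [corrDet, Complex.norm_conj, Complex.mul_re, Complex.mul_im, Complex.conj_re,
    Complex.conj_im]
  ring

variable {a₁ a₂ a₃}

lemma norm_le_one_of_corrDet_nonneg (h₁ : ‖a₁‖ < 1) (hdet : 0 ≤ corrDet a₁ a₂ a₃) :
    ‖a₂‖ ≤ 1 := by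
  have hp : 0 < 1 - ‖a₁‖ ^ 2 := sub_pos.2 (pow_lt_one₀ (norm_nonneg a₁) h₁ two_ne_zero)
  rw [corrDet_eq] at hdet
  have hq : 0 ≤ 1 - ‖a₂‖ ^ 2 :=
    nonneg_of_mul_nonneg_right (by linarith [sq_nonneg ‖a₃ - conj a₁ * a₂‖]) hp
  exact (sq_le_one_iff₀ (norm_nonneg a₂)).mp (by linarith)

lemma corrMatrix_posSemidef (h₁ : ‖a₁‖ < 1) (hdet : 0 ≤ corrDet a₁ a₂ a₃) :
    (corrMatrix a₁ a₂ a₃).PosSemidef := by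
  have hp : 0 < 1 - ‖a₁‖ ^ 2 := sub_pos.2 (pow_lt_one₀ (norm_nonneg a₁) h₁ two_ne_zero)
  have hschur : ‖a₃ - conj a₁ * a₂‖ ^ 2 ≤ (1 - ‖a₁‖ ^ 2) * (1 - ‖a₂‖ ^ 2) := by
    rw [corrDet_eq] at hdet
    linarith
  refine .of_re_dotProduct_mulVec_nonneg (corrMatrix_isHermitian a₁ a₂ a₃) fun x ↦ ?_
  rw [RCLike.re_to_complex, re_star_dotProduct_corrMatrix_mulVec]
  linarith [sq_nonneg ‖x 0 + a₁ * x 1 + a₂ * x 2‖,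
    Complex.mul_sq_norm_add_mul_sq_norm_add_two_re_nonneg hp hschur (x 1) (x 2)]

end

/-- If `|a₁| < 1` and `0 ≤ 1 + 2 Re(a₁ conj a₂ a₃) − |a₁|² − |a₂|² − |a₃|²`,
then `|a₂| ≤ 1`, `|a₃| ≤ 1`, and the Hermitian matrix
`N = !![1, a₁, a₂; conj a₁, 1, a₃; conj a₂, conj a₃, 1]` is positive semidefinite. -/
theorem stmt_2 (a₁ a₂ a₃ : ℂ) (h₁ : ‖a₁‖ < 1)
    (hdet : 0 ≤ 1 + 2 * (a₁ * (starRingEnd ℂ) a₂ * a₃).re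
        - ‖a₁‖ ^ 2 - ‖a₂‖ ^ 2 - ‖a₃‖ ^ 2) :
    ‖a₂‖ ≤ 1 ∧ ‖a₃‖ ≤ 1 ∧
      (!![1, a₁, a₂;
          (starRingEnd ℂ) a₁, 1, a₃;
          (starRingEnd ℂ) a₂, (starRingEnd ℂ) a₃, 1] : Matrix (Fin 3) (Fin 3) ℂ).PosSemidef := by
  have hdet : 0 ≤ corrDet a₁ a₂ a₃ := hdet
  refine ⟨norm_le_one_of_corrDet_nonneg h₁ hdet, ?_, corrMatrix_posSemidef h₁ hdet⟩
  rw [← corrDet_conj_swap] at hdet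
  exact norm_le_one_of_corrDet_nonneg (by rwa [Complex.norm_conj]) hdet
end

section
/- Fix 0 < x < 1 and set s = (1 − x)·√x. The 4×4 complex matrix Gr(H_x) with rows (1, x, x, x+is), (x, 1, x−is, x), (x, x+is, 1, x), (x−is, x, x, 1) is positive definite. In particular its leading principal minors are (taking them of sizes 1,2,3,4) 1, (1+x)(1−x), (1+x)(1−x)², and (1+x)²(1−x)⁴, all of which are positive for 0 < x < 1. -/
/-!
Write `J` for the all-ones matrix and `K` for the Hermitian involution `quigginTwist`. Since
`s = (1 - x)√x`, the Gram matrix splits as `G = x • J + (1 - x) • (1 + √x • K)`. Here `J` is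
positive semidefinite of rank one, and `1 + t • K` is positive definite for `|t| < 1` because `K`
has eigenvalues `±1`; so `G` is positive definite. The minors are polynomial identities in `x`
and `w = s * I`, where `w ^ 2 = -(1 - x) ^ 2 * x`.
-/

open scoped ComplexOrder

namespace Matrix

variable {𝕜 n : Type*} [RCLike 𝕜] [Fintype n] [DecidableEq n]

theorem IsHermitian.posSemidef_one_add_of_mul_self_eq_one {K : Matrix n n 𝕜}
    (hK : K.IsHermitian) (hKK : K * K = 1) : (1 + K).PosSemidef := by
  have h : 1 + K = (2⁻¹ : ℝ) • ((1 + K)ᴴ * (1 + K)) := by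
    rw [conjTranspose_add, conjTranspose_one, hK.eq, add_mul, mul_add, mul_add, hKK, one_mul,
      mul_one, one_mul]
    module
  rw [h]
  exact (posSemidef_conjTranspose_mul_self _).smul (by norm_num)

theorem IsHermitian.posDef_one_add_smul_of_mul_self_eq_one {K : Matrix n n 𝕜}
    (hK : K.IsHermitian) (hKK : K * K = 1) {t : ℝ} (ht : |t| < 1) :
    (1 + t • K).PosDef := by
  have of_nonneg : ∀ L : Matrix n n 𝕜, L.IsHermitian → L * L = 1 → ∀ u : ℝ, 0 ≤ u → u < 1 →
      (1 + u • L).PosDef := fun L hL hLL u hu0 hu1 => by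
    have h : 1 + u • L = (1 - u) • (1 : Matrix n n 𝕜) + u • (1 + L) := by module
    rw [h]
    exact (PosDef.one.smul (sub_pos.2 hu1)).add_posSemidef
      ((hL.posSemidef_one_add_of_mul_self_eq_one hLL).smul hu0)
  obtain ⟨ht₁, ht₂⟩ := abs_lt.1 ht
  rcases le_total 0 t with h | h
  · exact of_nonneg K hK hKK t h ht₂
  · simpa using of_nonneg (-K) hK.neg (by simpa using hKK) (-t) (neg_nonneg.2 h) (by linarith)

theorem det_fin_four {R : Type*} [CommRing R] (A : Matrix (Fin 4) (Fin 4) R) :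
    A.det = A 0 0 * A 1 1 * A 2 2 * A 3 3 - A 0 0 * A 1 1 * A 2 3 * A 3 2
      - A 0 0 * A 1 2 * A 2 1 * A 3 3 + A 0 0 * A 1 2 * A 2 3 * A 3 1
      + A 0 0 * A 1 3 * A 2 1 * A 3 2 - A 0 0 * A 1 3 * A 2 2 * A 3 1
      - A 0 1 * A 1 0 * A 2 2 * A 3 3 + A 0 1 * A 1 0 * A 2 3 * A 3 2
      + A 0 1 * A 1 2 * A 2 0 * A 3 3 - A 0 1 * A 1 2 * A 2 3 * A 3 0
      - A 0 1 * A 1 3 * A 2 0 * A 3 2 + A 0 1 * A 1 3 * A 2 2 * A 3 0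
      + A 0 2 * A 1 0 * A 2 1 * A 3 3 - A 0 2 * A 1 0 * A 2 3 * A 3 1
      - A 0 2 * A 1 1 * A 2 0 * A 3 3 + A 0 2 * A 1 1 * A 2 3 * A 3 0
      + A 0 2 * A 1 3 * A 2 0 * A 3 1 - A 0 2 * A 1 3 * A 2 1 * A 3 0
      - A 0 3 * A 1 0 * A 2 1 * A 3 2 + A 0 3 * A 1 0 * A 2 2 * A 3 1
      + A 0 3 * A 1 1 * A 2 0 * A 3 2 - A 0 3 * A 1 1 * A 2 2 * A 3 0
      - A 0 3 * A 1 2 * A 2 0 * A 3 1 + A 0 3 * A 1 2 * A 2 1 * A 3 0 := by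
  simp [det_succ_row_zero, Fin.sum_univ_succ, Fin.succAbove]
  ring

end Matrix

open Matrix Complex

def quigginTwist : Matrix (Fin 4) (Fin 4) ℂ :=
  !![0, 0, 0, I; 0, 0, -I, 0; 0, I, 0, 0; -I, 0, 0, 0]

theorem quigginTwist_isHermitian : quigginTwist.IsHermitian := by
  ext i j
  fin_cases i <;> fin_cases j <;> simp [quigginTwist]

theorem quigginTwist_mul_self : quigginTwist * quigginTwist = 1 := by
  ext i j
  fin_cases i <;> fin_cases j <;> simp [quigginTwist, mul_apply, Fin.sum_univ_four]

section Minors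

variable {R : Type*} [CommRing R] {x w : R}

theorem det_quiggin_three (hw : w ^ 2 = -((1 - x) ^ 2 * x)) :
    !![1, x, x; x, 1, x - w; x, x + w, 1].det = (1 + x) * (1 - x) ^ 2 := by
  rw [det_fin_three]
  simp only [of_apply, cons_val', cons_val_zero, cons_val_one, cons_val, cons_val_fin_one]
  linear_combination hw

theorem det_quiggin_four (hw : w ^ 2 = -((1 - x) ^ 2 * x)) :
    !![1, x, x, x + w; x, 1, x - w, x; x, x + w, 1, x; x - w, x, x, 1].det =
      (1 + x) ^ 2 * (1 - x) ^ 4 := by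
  rw [det_fin_four]
  simp only [of_apply, cons_val', cons_val_zero, cons_val_one, cons_val, cons_val_fin_one]
  -- the determinant is `(1 - x) ^ 3 * (1 + 3 * x) + 2 * (1 - x ^ 2) * w ^ 2 + w ^ 4`
  linear_combination (2 - 2 * x ^ 2 + w ^ 2 - (1 - x) ^ 2 * x) * hw

end Minors

/-- For `0 < x < 1` and `s = (1-x)√x`, Quiggin's Gram matrix
`Gr(H_x)` is positive definite; its leading principal minors of sizes 1,2,3,4 are
`1`, `(1+x)(1-x)`, `(1+x)(1-x)²`, `(1+x)²(1-x)⁴`, all positive for `0 < x < 1`. -/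
theorem stmt_6 (x : ℝ) (hx0 : 0 < x) (hx1 : x < 1) :
    let s : ℝ := (1 - x) * Real.sqrt x
    let G : Matrix (Fin 4) (Fin 4) ℂ :=
      !![1, (x : ℂ), (x : ℂ), (x : ℂ) + (s : ℂ) * Complex.I;
         (x : ℂ), 1, (x : ℂ) - (s : ℂ) * Complex.I, (x : ℂ);
         (x : ℂ), (x : ℂ) + (s : ℂ) * Complex.I, 1, (x : ℂ);
         (x : ℂ) - (s : ℂ) * Complex.I, (x : ℂ), (x : ℂ), 1]
    G.PosDef ∧
      (G.submatrix (Fin.castLE (by norm_num) : Fin 1 → Fin 4)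
        (Fin.castLE (by norm_num) : Fin 1 → Fin 4)).det = ((1 : ℝ) : ℂ) ∧
      (G.submatrix (Fin.castLE (by norm_num) : Fin 2 → Fin 4)
        (Fin.castLE (by norm_num) : Fin 2 → Fin 4)).det = (((1 + x) * (1 - x) : ℝ) : ℂ) ∧
      (G.submatrix (Fin.castLE (by norm_num) : Fin 3 → Fin 4)
        (Fin.castLE (by norm_num) : Fin 3 → Fin 4)).det = (((1 + x) * (1 - x) ^ 2 : ℝ) : ℂ) ∧
      G.det = (((1 + x) ^ 2 * (1 - x) ^ 4 : ℝ) : ℂ) ∧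
      0 < (1 : ℝ) ∧ 0 < (1 + x) * (1 - x) ∧ 0 < (1 + x) * (1 - x) ^ 2 ∧
        0 < (1 + x) ^ 2 * (1 - x) ^ 4 := by
  intro s G
  have h1x : 0 < 1 - x := sub_pos.2 hx1
  have hw : ((s : ℂ) * I) ^ 2 = -((1 - x) ^ 2 * x) := by
    rw [mul_pow, I_sq, ← ofReal_pow, mul_pow, Real.sq_sqrt hx0.le]
    push_cast
    ring
  have hG : G = x • vecMulVec 1 (star 1) + (1 - x) • (1 + √x • quigginTwist) := by
    ext i j
    fin_cases i <;> fin_cases j <;> simp [G, s, quigginTwist, vecMulVec] <;> ring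
  have hsqrt : |√x| < 1 := by
    rwa [abs_of_nonneg (Real.sqrt_nonneg x), Real.sqrt_lt' one_pos, one_pow]
  refine ⟨?_, by simp [G], ?_, ?_, ?_, one_pos, mul_pos (by linarith) h1x,
    mul_pos (by linarith) (pow_pos h1x 2), mul_pos (pow_pos (by linarith) 2) (pow_pos h1x 4)⟩
  · rw [hG]
    exact PosDef.posSemidef_add ((posSemidef_vecMulVec_self_star 1).smul hx0.le)
      ((quigginTwist_isHermitian.posDef_one_add_smul_of_mul_self_eq_one
        quigginTwist_mul_self hsqrt).smul h1x)
  · rw [det_fin_two]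
    push_cast
    exact (by ring : (1 : ℂ) * 1 - x * x = (1 + x) * (1 - x))
  · push_cast
    rw [← det_quiggin_three hw]
    congr 1
    ext i j
    fin_cases i <;> fin_cases j <;> rfl
  · push_cast
    exact det_quiggin_four hw
end

section
/- Fix 0 < x < 1 and set s = (1 − x)·√x. Let MQ be the 3×3 complex matrix with rows (1−x², 1 − x²/(x−is), 1−x−is), (1 − x²/(x+is), 1−x², 1−x−is), (1−x+is, 1−x+is, (1−x)(1+x²)). Then det MQ = −x³(x+1)²(x−1)⁴/(x²−x+1); in particular det MQ < 0, and MQ is not positive semidefinite. -/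
open scoped ComplexOrder

/-! With `u = i s` one has `u² = -(1 - x)² x`, hence `(x - u)(x + u) = x (x² - x + 1)`: the two
entries `1 - x² / (x ∓ u)` become `(1 - x ± x u) / (x² - x + 1)`, and the determinant reduces to a
polynomial identity modulo `u²`. A positive semidefinite matrix has nonnegative determinant. -/

theorem Matrix.det_fin_three_of_swap_symm {R : Type*} [CommRing R] (a b c d g i : R) :
    !![a, b, c; d, a, c; g, g, i].det = a ^ 2 * i - 2 * a * (c * g) - b * d * i + c * g * (b + d) := by
  simp only [det_fin_three, of_apply, cons_val', cons_val_zero, cons_val_fin_one, cons_val_one,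
    cons_val]
  ring

/-- `MQ(H_x,1)` over an arbitrary field, with `u` in place of `i s`. -/
def quigginMQ {K : Type*} [Field K] (x u : K) : Matrix (Fin 3) (Fin 3) K :=
  !![1 - x ^ 2, 1 - x ^ 2 / (x - u), 1 - x - u;
     1 - x ^ 2 / (x + u), 1 - x ^ 2, 1 - x - u;
     1 - x + u, 1 - x + u, (1 - x) * (1 + x ^ 2)]

theorem quigginMQ_det {K : Type*} [Field K] {x u : K} (hu : u ^ 2 = -((1 - x) ^ 2 * x)) (hx : x ≠ 0)
    (hq : x ^ 2 - x + 1 ≠ 0) :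
    (quigginMQ x u).det = -(x ^ 3 * (x + 1) ^ 2 * (x - 1) ^ 4 / (x ^ 2 - x + 1)) := by
  have hprod : (x - u) * (x + u) = x * (x ^ 2 - x + 1) := by linear_combination -hu
  have hsub : x - u ≠ 0 := left_ne_zero_of_mul (hprod ▸ mul_ne_zero hx hq)
  have hadd : x + u ≠ 0 := right_ne_zero_of_mul (hprod ▸ mul_ne_zero hx hq)
  have hb : 1 - x ^ 2 / (x - u) = (1 - x - x * u) / (x ^ 2 - x + 1) := by
    rw [one_sub_div hsub, div_eq_div_iff hsub hq]
    linear_combination -x * hu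
  have hd : 1 - x ^ 2 / (x + u) = (1 - x + x * u) / (x ^ 2 - x + 1) := by
    rw [one_sub_div hadd, div_eq_div_iff hadd hq]
    linear_combination -x * hu
  have hcg : (1 - x - u) * (1 - x + u) = (1 - x) ^ 2 * (1 + x) := by linear_combination -hu
  rw [quigginMQ, Matrix.det_fin_three_of_swap_symm, hb, hd, hcg]
  -- keeps `field_simp` from renormalising the denominator into a form it cannot see is nonzero
  generalize hqdef : x ^ 2 - x + 1 = q at hq ⊢
  field_simp
  subst hqdef
  -- the only `u` left is in `b * d * i`, contributing `x² u² i`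
  linear_combination x ^ 2 * (1 - x) * (1 + x ^ 2) * hu

theorem quiggin_denom_pos (x : ℝ) : 0 < x ^ 2 - x + 1 := by
  nlinarith [sq_nonneg (x - 1 / 2)]

theorem quiggin_det_neg {x : ℝ} (hx0 : 0 < x) (hx1 : x < 1) :
    -(x ^ 3 * (x + 1) ^ 2 * (x - 1) ^ 4 / (x ^ 2 - x + 1)) < 0 := by
  have hx1' : x - 1 ≠ 0 := sub_ne_zero.2 hx1.ne
  have : 0 < x ^ 3 * (x + 1) ^ 2 * (x - 1) ^ 4 := by positivity
  exact neg_neg_iff_pos.2 (div_pos this (quiggin_denom_pos x))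

/-- For `0 < x < 1` and `s = (1-x)√x`, the matrix `MQ(H_x,1)` of Quiggin's
example has determinant `−x³(x+1)²(x−1)⁴/(x²−x+1) < 0`, hence is not positive semidefinite. -/
theorem stmt_7 (x : ℝ) (hx0 : 0 < x) (hx1 : x < 1) :
    let s : ℝ := (1 - x) * Real.sqrt x
    let MQ : Matrix (Fin 3) (Fin 3) ℂ :=
      !![1 - (x : ℂ) ^ 2, 1 - (x : ℂ) ^ 2 / ((x : ℂ) - (s : ℂ) * Complex.I),
           1 - (x : ℂ) - (s : ℂ) * Complex.I;
         1 - (x : ℂ) ^ 2 / ((x : ℂ) + (s : ℂ) * Complex.I), 1 - (x : ℂ) ^ 2,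
           1 - (x : ℂ) - (s : ℂ) * Complex.I;
         1 - (x : ℂ) + (s : ℂ) * Complex.I, 1 - (x : ℂ) + (s : ℂ) * Complex.I,
           (1 - (x : ℂ)) * (1 + (x : ℂ) ^ 2)]
    MQ.det = ((-(x ^ 3 * (x + 1) ^ 2 * (x - 1) ^ 4 / (x ^ 2 - x + 1)) : ℝ) : ℂ) ∧
      (-(x ^ 3 * (x + 1) ^ 2 * (x - 1) ^ 4 / (x ^ 2 - x + 1)) : ℝ) < 0 ∧
      ¬ MQ.PosSemidef := by
  intro s MQ
  have hs : s ^ 2 = (1 - x) ^ 2 * x := by rw [mul_pow, Real.sq_sqrt hx0.le]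
  have hu : ((s : ℂ) * Complex.I) ^ 2 = -((1 - (x : ℂ)) ^ 2 * x) := by
    rw [mul_pow, Complex.I_sq, ← Complex.ofReal_pow, hs]
    push_cast
    ring
  have hq : (x : ℂ) ^ 2 - x + 1 ≠ 0 := by exact_mod_cast (quiggin_denom_pos x).ne'
  have hdet : MQ.det = ((-(x ^ 3 * (x + 1) ^ 2 * (x - 1) ^ 4 / (x ^ 2 - x + 1)) : ℝ) : ℂ) := by
    rw [show MQ = quigginMQ (x : ℂ) (s * Complex.I) from rfl,
      quigginMQ_det hu (Complex.ofReal_ne_zero.2 hx0.ne') hq]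
    push_cast
    rfl
  refine ⟨hdet, quiggin_det_neg hx0 hx1, fun hpsd => ?_⟩
  have hdet_nonneg := hdet ▸ hpsd.det_nonneg
  exact (quiggin_det_neg hx0 hx1).not_ge (Complex.zero_le_real.1 hdet_nonneg)
end

section
/- Fix 0 < x < 1 and set s = (1 − x)·√x. Let MQ be the 3×3 complex matrix with rows (1−x², 1 − x²/(x−is), 1−x−is), (1 − x²/(x+is), 1−x², 1−x−is), (1−x+is, 1−x+is, (1−x)(1+x²)). Then each of the three 2×2 principal submatrices of MQ (obtained by deleting the j-th row and j-th column, j = 1, 2, 3) is positive semidefinite; the submatrices obtained by deleting the first row and column and by deleting the second row and column each have determinant x²(x+1)(x−1)². -/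
/-!
The first two principal submatrices coincide. A Hermitian `2 × 2` matrix `!![a, b; b̄, d]` with
`a > 0` is positive semidefinite as soon as its determinant `a d - |b|²` is nonnegative, since it
is `a⁻¹ • u uᴴ` for `u = (a, b̄)` plus `diag(0, d - |b|²/a)`. So everything reduces to computing
`|b|²` with `s² = (1 - x)² x`: `|1 - x - i s|² = (1 - x)²(1 + x)`, and
`1 - x²/(x - i s) = (1 - x - i x s)/(x² - x + 1)` has `|·|² = (1 - x)²(1 + x)/(x² - x + 1)`,
which is at most `(1 - x²)²` because `(1 + x)(x² - x + 1) = 1 + x³`.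
-/

open scoped ComplexOrder
open Matrix Complex

theorem Matrix.posSemidef_fin_two_of_normSq_le {a d : ℝ} {b : ℂ} (ha : 0 < a)
    (h : normSq b ≤ a * d) : !![(a : ℂ), b; star b, (d : ℂ)].PosSemidef := by
  have ha' : (a : ℂ) ≠ 0 := ofReal_ne_zero.2 ha.ne'
  have hsplit : !![(a : ℂ), b; star b, (d : ℂ)] =
      a⁻¹ • vecMulVec ![(a : ℂ), star b] (star ![(a : ℂ), star b]) +
        diagonal ![0, (((a * d - normSq b) / a : ℝ) : ℂ)] := by
    ext i j
    fin_cases i <;> fin_cases j <;>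
      simp only [add_apply, smul_apply, vecMulVec_apply, diagonal_apply, Pi.star_apply] <;>
      simp [real_smul, normSq_eq_conj_mul_self] <;> field_simp
    ring
  rw [hsplit]
  refine ((posSemidef_vecMulVec_self_star _).smul (inv_nonneg.2 ha.le)).add (.diagonal ?_)
  intro i
  fin_cases i
  · simp
  · simp only [Fin.mk_one, cons_val_one, cons_val_zero, Pi.zero_apply]
    exact_mod_cast div_nonneg (sub_nonneg.2 h) ha.le

theorem Matrix.det_fin_two_of_ofReal_star (a d : ℝ) (b : ℂ) :
    !![(a : ℂ), b; star b, (d : ℂ)].det = ((a * d - normSq b : ℝ) : ℂ) := by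
  rw [det_fin_two_of, star_def, ofReal_sub, ofReal_mul, normSq_eq_conj_mul_self]
  ring

theorem normSq_one_sub_ofReal_sub_mul_I {x s : ℝ} (hs : s ^ 2 = (1 - x) ^ 2 * x) :
    normSq (1 - (x : ℂ) - s * I) = (1 - x) ^ 2 * (1 + x) := by
  have : 1 - (x : ℂ) - s * I = ((1 - x : ℝ) : ℂ) + ((-s : ℝ) : ℂ) * I := by push_cast; ring
  rw [this, normSq_add_mul_I]
  linear_combination hs

theorem one_sub_sq_div_ofReal_sub_mul_I {x s : ℝ} (hx : 0 < x) (hs : s ^ 2 = (1 - x) ^ 2 * x) :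
    1 - (x : ℂ) ^ 2 / (x - s * I) =
      (((1 - x) / (x ^ 2 - x + 1) : ℝ) : ℂ) + ((-(x * s) / (x ^ 2 - x + 1) : ℝ) : ℂ) * I := by
  have hden : (x : ℂ) - s * I ≠ 0 := fun h => by simpa [hx.ne'] using congrArg re h
  have hq : ((x ^ 2 - x + 1 : ℝ) : ℂ) ≠ 0 := by exact_mod_cast (by nlinarith : x ^ 2 - x + 1 ≠ 0)
  have hsC : (s : ℂ) ^ 2 = (1 - x) ^ 2 * x := by exact_mod_cast hs
  push_cast at hq ⊢
  -- keeps `field_simp` from renormalising the denominator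
  generalize hqdef : (x : ℂ) ^ 2 - x + 1 = q at hq ⊢
  field_simp
  linear_combination (-(x - s * I - x ^ 2)) * hqdef + x * hsC - x * s ^ 2 * I_sq

theorem normSq_one_sub_sq_div_ofReal_sub_mul_I {x s : ℝ} (hx : 0 < x)
    (hs : s ^ 2 = (1 - x) ^ 2 * x) :
    normSq (1 - (x : ℂ) ^ 2 / (x - s * I)) = (1 - x) ^ 2 * (1 + x) / (x ^ 2 - x + 1) := by
  have hq : x ^ 2 - x + 1 ≠ 0 := by nlinarith
  rw [one_sub_sq_div_ofReal_sub_mul_I hx hs, normSq_add_mul_I]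
  generalize hqdef : x ^ 2 - x + 1 = q at hq ⊢
  field_simp
  linear_combination x ^ 2 * hs + (1 - x) ^ 2 * (1 + x) * hqdef

/-- For `0 < x < 1` and `s = (1-x)√x`, each of the three `2×2` principal
submatrices of the matrix `MQ(H_x,1)` of Quiggin's example is positive semidefinite; the
ones obtained by deleting the first, resp. second, row and column have determinant
`x²(x+1)(x−1)²`. -/
theorem stmt_8 (x : ℝ) (hx0 : 0 < x) (hx1 : x < 1) :
    let s : ℝ := (1 - x) * Real.sqrt x
    let MQ : Matrix (Fin 3) (Fin 3) ℂ :=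
      !![1 - (x : ℂ) ^ 2, 1 - (x : ℂ) ^ 2 / ((x : ℂ) - (s : ℂ) * Complex.I),
           1 - (x : ℂ) - (s : ℂ) * Complex.I;
         1 - (x : ℂ) ^ 2 / ((x : ℂ) + (s : ℂ) * Complex.I), 1 - (x : ℂ) ^ 2,
           1 - (x : ℂ) - (s : ℂ) * Complex.I;
         1 - (x : ℂ) + (s : ℂ) * Complex.I, 1 - (x : ℂ) + (s : ℂ) * Complex.I,
           (1 - (x : ℂ)) * (1 + (x : ℂ) ^ 2)]
    let A₁ : Matrix (Fin 2) (Fin 2) ℂ := !![MQ 1 1, MQ 1 2; MQ 2 1, MQ 2 2]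
    let A₂ : Matrix (Fin 2) (Fin 2) ℂ := !![MQ 0 0, MQ 0 2; MQ 2 0, MQ 2 2]
    let A₃ : Matrix (Fin 2) (Fin 2) ℂ := !![MQ 0 0, MQ 0 1; MQ 1 0, MQ 1 1]
    A₁.PosSemidef ∧ A₂.PosSemidef ∧ A₃.PosSemidef ∧
      A₁.det = ((x ^ 2 * (x + 1) * (x - 1) ^ 2 : ℝ) : ℂ) ∧
      A₂.det = ((x ^ 2 * (x + 1) * (x - 1) ^ 2 : ℝ) : ℂ) := by
  intro s MQ A₁ A₂ A₃
  have hs : s ^ 2 = (1 - x) ^ 2 * x := by rw [mul_pow, Real.sq_sqrt hx0.le]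
  have hA₁ : A₁ = !![((1 - x ^ 2 : ℝ) : ℂ), 1 - x - s * I;
      star (1 - x - s * I), (((1 - x) * (1 + x ^ 2) : ℝ) : ℂ)] := by
    ext i j; fin_cases i <;> fin_cases j <;> simp [A₁, MQ]
  have hA₃ : A₃ = !![((1 - x ^ 2 : ℝ) : ℂ), 1 - x ^ 2 / (x - s * I);
      star (1 - x ^ 2 / (x - s * I)), ((1 - x ^ 2 : ℝ) : ℂ)] := by
    ext i j; fin_cases i <;> fin_cases j <;> simp [A₃, MQ]
  have hgap₁ : (1 - x ^ 2) * ((1 - x) * (1 + x ^ 2)) - normSq (1 - (x : ℂ) - s * I) =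
      x ^ 2 * (x + 1) * (x - 1) ^ 2 := by
    rw [normSq_one_sub_ofReal_sub_mul_I hs]; ring
  have hdet₁ : A₁.det = ((x ^ 2 * (x + 1) * (x - 1) ^ 2 : ℝ) : ℂ) := by
    rw [hA₁, det_fin_two_of_ofReal_star, hgap₁]
  have hpsd₁ : A₁.PosSemidef := by
    rw [hA₁]
    refine posSemidef_fin_two_of_normSq_le (by nlinarith) ?_
    have : 0 ≤ (x * (x - 1)) ^ 2 * (x + 1) := mul_nonneg (sq_nonneg _) (by linarith)
    linarith
  have hpsd₃ : A₃.PosSemidef := by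
    rw [hA₃]
    refine posSemidef_fin_two_of_normSq_le (by nlinarith) ?_
    rw [normSq_one_sub_sq_div_ofReal_sub_mul_I hx0 hs, div_le_iff₀ (by nlinarith)]
    have hgap₃ : (1 - x ^ 2) * (1 - x ^ 2) * (x ^ 2 - x + 1) - (1 - x) ^ 2 * (1 + x) =
        (1 - x) ^ 2 * (1 + x) * x ^ 3 := by ring
    have : 0 ≤ (1 - x) ^ 2 * (1 + x) * x ^ 3 :=
      mul_nonneg (mul_nonneg (sq_nonneg _) (by linarith)) (pow_nonneg hx0.le 3)
    linarith
  exact ⟨hpsd₁, hpsd₁, hpsd₃, hdet₁, hdet₁⟩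
end

section
/- Let A, B, C ∈ (0, π) be real numbers with (cos A + cos B·cos C)² ≤ (1 − cos²B)(1 − cos²C). Then π ≤ A + B + C. -/
/-!
Since `1 - cos² = sin²`, the hypothesis says `|cos A + cos B cos C| ≤ sin B sin C`, hence
`cos A ≤ -cos (B + C) = cos (π - (B + C))`. When `B + C < π` both `A` and `π - (B + C)` lie in
`[0, π]`, where `cos` is decreasing, so `π - (B + C) ≤ A`.
-/

open Real

theorem cos_le_neg_cos_add_of_sq_le {A B C : ℝ} (hB : 0 ≤ sin B) (hC : 0 ≤ sin C)
    (h : (cos A + cos B * cos C) ^ 2 ≤ (1 - cos B ^ 2) * (1 - cos C ^ 2)) :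
    cos A ≤ -cos (B + C) := by
  have hsq : (cos A + cos B * cos C) ^ 2 ≤ (sin B * sin C) ^ 2 := by
    rwa [mul_pow, sin_sq, sin_sq]
  have hle := (abs_le_of_sq_le_sq' hsq (mul_nonneg hB hC)).2
  rw [cos_add]
  linarith

/-- For `A B C ∈ (0, π)` with
`(cos A + cos B cos C)² ≤ (1 − cos²B)(1 − cos²C)`, one has `π ≤ A + B + C`
(the angle-sum condition for good dihedral angles). -/
theorem stmt_14 (A B C : ℝ) (hA : A ∈ Set.Ioo 0 Real.pi)
    (hB : B ∈ Set.Ioo 0 Real.pi) (hC : C ∈ Set.Ioo 0 Real.pi)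
    (h : (Real.cos A + Real.cos B * Real.cos C) ^ 2 ≤
      (1 - Real.cos B ^ 2) * (1 - Real.cos C ^ 2)) :
    Real.pi ≤ A + B + C := by
  obtain ⟨hA0, hAπ⟩ := hA
  obtain ⟨hB0, hBπ⟩ := hB
  obtain ⟨hC0, hCπ⟩ := hC
  rcases le_or_gt π (B + C) with hBC | hBC
  · linarith
  have hcos : cos A ≤ cos (π - (B + C)) := by
    rw [cos_pi_sub]
    exact cos_le_neg_cos_add_of_sq_le (sin_nonneg_of_nonneg_of_le_pi hB0.le hBπ.le)
      (sin_nonneg_of_nonneg_of_le_pi hC0.le hCπ.le) h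
  have hle : π - (B + C) ≤ A :=
    (strictAntiOn_cos.le_iff_ge ⟨hA0.le, hAπ.le⟩ ⟨by linarith, by linarith⟩).1 hcos
  linarith
end

section
/- Let x₁, x₂, x₃ ∈ ℂ be such that 1 − x_a·conj(x_b) ≠ 0 for all a, b ∈ {1,2,3}. Define k_{ab} = (1 − x_a·conj(x_b))⁻¹ and, for a triple (a,b,c), κ_{abc} = ((x_a − x_b)/(1 − x_a·conj(x_b)))·conj((x_a − x_c)/(1 − x_a·conj(x_c))). Then κ₁₂₃·κ₂₃₁·κ₃₁₂ = −|x₁ − x₂|²·|x₂ − x₃|²·|x₃ − x₁|²·(k₁₂·k₂₃·k₃₁)². -/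
/-!
Write `d_ab = 1 - x_a conj x_b`. Since `conj d_ac = d_ca`, the six denominators of the three
`κ` factors pair up into `(d₁₂ d₂₃ d₃₁)²`, while the numerators pair `x_a - x_b` with
`conj (x_a - x_b)` up to the sign `(-1)³` coming from the cyclic order.
-/

theorem star_one_sub_mul_star {R : Type*} [CommRing R] [StarRing R] (a b : R) :
    star (1 - a * star b) = 1 - b * star a := by
  rw [star_sub, star_one, star_mul, star_star]

theorem cyclic_prod_div_mul_star_div {K : Type*} [Field K] [StarRing K] (x y z : K) :
    let q : K → K → K := fun a b => (a - b) / (1 - a * star b)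
    q x y * star (q x z) * (q y z * star (q y x)) * (q z x * star (q z y)) =
      -((x - y) * star (x - y) * ((y - z) * star (y - z)) * ((z - x) * star (z - x))) *
        ((1 - x * star y)⁻¹ * (1 - y * star z)⁻¹ * (1 - z * star x)⁻¹) ^ 2 := by
  intro q
  simp only [q, star_div₀, star_one_sub_mul_star]
  -- `star_sub` only now, or it would split the denominators before they are recognised
  simp only [star_sub]
  ring

theorem stmt_16_general (x₁ x₂ x₃ : ℂ) :
    let k : ℂ → ℂ → ℂ := fun a b => (1 - a * (starRingEnd ℂ) b)⁻¹
    let κ : ℂ → ℂ → ℂ → ℂ := fun a b c =>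
      ((a - b) / (1 - a * (starRingEnd ℂ) b)) *
        (starRingEnd ℂ) ((a - c) / (1 - a * (starRingEnd ℂ) c))
    κ x₁ x₂ x₃ * κ x₂ x₃ x₁ * κ x₃ x₁ x₂ =
      -((‖x₁ - x₂‖ ^ 2 * ‖x₂ - x₃‖ ^ 2
          * ‖x₃ - x₁‖ ^ 2 : ℝ) : ℂ) * (k x₁ x₂ * k x₂ x₃ * k x₃ x₁) ^ 2 := by
  intro k κ
  have := cyclic_prod_div_mul_star_div x₁ x₂ x₃
  simp only [← starRingEnd_apply, Complex.mul_conj'] at this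
  push_cast
  exact this

/-- For `x₁ x₂ x₃ : ℂ` with `1 − x_a · conj x_b ≠ 0` for all
`a, b ∈ {x₁, x₂, x₃}`, setting `k_{ab} = (1 − x_a conj x_b)⁻¹` and
`κ_{abc} = ((x_a − x_b)/(1 − x_a conj x_b)) · conj((x_a − x_c)/(1 − x_a conj x_c))`, one has
`κ₁₂₃ κ₂₃₁ κ₃₁₂ = −|x₁−x₂|²|x₂−x₃|²|x₃−x₁|² (k₁₂ k₂₃ k₃₁)²`. -/
theorem stmt_16 (x₁ x₂ x₃ : ℂ)
    (h : ∀ a ∈ ({x₁, x₂, x₃} : Set ℂ), ∀ b ∈ ({x₁, x₂, x₃} : Set ℂ),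
      1 - a * (starRingEnd ℂ) b ≠ 0) :
    let k : ℂ → ℂ → ℂ := fun a b => (1 - a * (starRingEnd ℂ) b)⁻¹
    let κ : ℂ → ℂ → ℂ → ℂ := fun a b c =>
      ((a - b) / (1 - a * (starRingEnd ℂ) b)) *
        (starRingEnd ℂ) ((a - c) / (1 - a * (starRingEnd ℂ) c))
    κ x₁ x₂ x₃ * κ x₂ x₃ x₁ * κ x₃ x₁ x₂ =
      -((‖x₁ - x₂‖ ^ 2 * ‖x₂ - x₃‖ ^ 2
          * ‖x₃ - x₁‖ ^ 2 : ℝ) : ℂ) * (k x₁ x₂ * k x₂ x₃ * k x₃ x₁) ^ 2 :=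
  stmt_16_general x₁ x₂ x₃
end

section
/- Let x₁, x₂, x₃ be distinct points of the open unit disc in ℂ. With k_{ab} = (1 − x_a·conj(x_b))⁻¹ and κ_{abc} = ((x_a − x_b)/(1 − x_a·conj(x_b)))·conj((x_a − x_c)/(1 − x_a·conj(x_c))), one has, as angles modulo 2π, π − arg(κ₁₂₃·κ₂₃₁·κ₃₁₂) ≡ −2·arg(k₁₂·k₂₃·k₃₁) (mod 2π). -/
/-! With `s = (x₁ - x₂)(x₂ - x₃)(x₃ - x₁)` and `D = (1 - x₁ x̄₂)(1 - x₂ x̄₃)(1 - x₃ x̄₁)`, the product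
`k₁₂ k₂₃ k₃₁` is `D⁻¹`, while the six denominators of `κ₁₂₃ κ₂₃₁ κ₃₁₂` pair up into `D²` (since
`conj (1 - a c̄) = 1 - c ā`) and its numerator is `s · conj (-s) = -|s|²`. Hence
`κ₁₂₃ κ₂₃₁ κ₃₁₂ = -|s|² / D²`, whose argument is `π - 2 arg D` because `s ≠ 0` for distinct points. -/

open ComplexConjugate Real

lemma one_sub_mul_conj_ne_zero {a b : ℂ} (ha : ‖a‖ < 1) (hb : ‖b‖ < 1) :
    1 - a * conj b ≠ 0 := by
  intro h
  have hab : ‖a * conj b‖ = 1 := by rw [← sub_eq_zero.mp h, norm_one]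
  rw [norm_mul, Complex.norm_conj] at hab
  nlinarith [norm_nonneg a, norm_nonneg b]

lemma cyclic_product_mul_conj_eq {a b c : ℂ} (ha : ‖a‖ < 1) (hb : ‖b‖ < 1) (hc : ‖c‖ < 1) :
    (a - b) / (1 - a * conj b) * conj ((a - c) / (1 - a * conj c)) *
        ((b - c) / (1 - b * conj c) * conj ((b - a) / (1 - b * conj a))) *
        ((c - a) / (1 - c * conj a) * conj ((c - b) / (1 - c * conj b))) =
      -(Complex.normSq ((a - b) * (b - c) * (c - a)) : ℂ) /
        ((1 - a * conj b) * (1 - b * conj c) * (1 - c * conj a)) ^ 2 := by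
  have hab := one_sub_mul_conj_ne_zero ha hb
  have hbc := one_sub_mul_conj_ne_zero hb hc
  have hca := one_sub_mul_conj_ne_zero hc ha
  have hac : 1 - conj a * c ≠ 0 := by rwa [mul_comm]
  have hba : 1 - conj b * a ≠ 0 := by rwa [mul_comm]
  have hcb : 1 - conj c * b ≠ 0 := by rwa [mul_comm]
  rw [← Complex.mul_conj]
  simp only [map_div₀, map_sub, map_mul, map_one, Complex.conj_conj]
  field_simp
  ring

lemma arg_neg_ofReal_div_sq_coe_angle {r : ℝ} (hr : 0 < r) {z : ℂ} (hz : z ≠ 0) :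
    ((-(r : ℂ) / z ^ 2).arg : Angle) = π - 2 • (z.arg : Angle) := by
  have hr' : (r : ℂ) ≠ 0 := Complex.ofReal_ne_zero.mpr hr.ne'
  rw [div_eq_mul_inv,
    Complex.arg_mul_coe_angle (neg_ne_zero.mpr hr') (inv_ne_zero (pow_ne_zero 2 hz)),
    Complex.arg_neg_coe_angle hr', Complex.arg_inv_coe_angle, Complex.arg_ofReal_of_nonneg hr.le,
    sq, Complex.arg_mul_coe_angle hz hz, Real.Angle.coe_zero]
  abel

/-- For distinct points `x₁ x₂ x₃` of the open unit disc, with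
`k_{ab} = (1 − x_a conj x_b)⁻¹` and
`κ_{abc} = ((x_a − x_b)/(1 − x_a conj x_b)) · conj((x_a − x_c)/(1 − x_a conj x_c))`, one has,
modulo `2π`, `π − arg(κ₁₂₃ κ₂₃₁ κ₃₁₂) ≡ −2 arg(k₁₂ k₂₃ k₃₁)`. -/
theorem stmt_17 (x₁ x₂ x₃ : ℂ)
    (h₁ : ‖x₁‖ < 1) (h₂ : ‖x₂‖ < 1) (h₃ : ‖x₃‖ < 1)
    (h₁₂ : x₁ ≠ x₂) (h₁₃ : x₁ ≠ x₃) (h₂₃ : x₂ ≠ x₃) :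
    let k : ℂ → ℂ → ℂ := fun a b => (1 - a * (starRingEnd ℂ) b)⁻¹
    let κ : ℂ → ℂ → ℂ → ℂ := fun a b c =>
      ((a - b) / (1 - a * (starRingEnd ℂ) b)) *
        (starRingEnd ℂ) ((a - c) / (1 - a * (starRingEnd ℂ) c))
    ((Real.pi - (κ x₁ x₂ x₃ * κ x₂ x₃ x₁ * κ x₃ x₁ x₂).arg : ℝ) : Real.Angle) =
      ((-2 * (k x₁ x₂ * k x₂ x₃ * k x₃ x₁).arg : ℝ) : Real.Angle) := by
  intro k κ
  set D := (1 - x₁ * conj x₂) * (1 - x₂ * conj x₃) * (1 - x₃ * conj x₁)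
  have hD : D ≠ 0 := mul_ne_zero (mul_ne_zero (one_sub_mul_conj_ne_zero h₁ h₂)
    (one_sub_mul_conj_ne_zero h₂ h₃)) (one_sub_mul_conj_ne_zero h₃ h₁)
  have hs : (x₁ - x₂) * (x₂ - x₃) * (x₃ - x₁) ≠ 0 := by
    simp only [ne_eq, mul_eq_zero, sub_eq_zero, not_or]
    exact ⟨⟨h₁₂, h₂₃⟩, h₁₃.symm⟩
  have hk : k x₁ x₂ * k x₂ x₃ * k x₃ x₁ = D⁻¹ := by simp only [k, D, mul_inv]
  have hκ : ((κ x₁ x₂ x₃ * κ x₂ x₃ x₁ * κ x₃ x₁ x₂).arg : Angle) = π - 2 • (D.arg : Angle) :=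
    (cyclic_product_mul_conj_eq h₁ h₂ h₃).symm ▸
      arg_neg_ofReal_div_sq_coe_angle (Complex.normSq_pos.mpr hs) hD
  rw [Real.Angle.coe_sub, hκ, hk, show (-2 : ℝ) * D⁻¹.arg = (-2 : ℤ) • D⁻¹.arg by simp,
    Real.Angle.coe_zsmul, Complex.arg_inv_coe_angle]
  abel
end

section
/- For each t ∈ [1, √2] let θ(t) = arccos((t² + 7)/(8t)) and consider the points of ℂ²: x₁ = (0,0), x₂ = (1/2, 0), x₃(t) = (t·e^{iθ(t)}/2, √(2 − t²)/2). Define δ(y, w)² = 1 − (1 − ‖y‖²)(1 − ‖w‖²)/|1 − ⟨y, w⟩|² for y, w in the open unit ball of ℂ². Then for every t ∈ [1, √2]: δ(x₁, x₂) = 1/2, δ(x₁, x₃(t))² = 1/2, and δ(x₂, x₃(t))² = 1/3; in particular all three pairwise pseudohyperbolic distances are independent of t. -/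
/-- The square of the pseudohyperbolic distance on the open unit ball of `ℂ²`,
`δ(y,w)² = 1 − (1 − ‖y‖²)(1 − ‖w‖²)/|1 − ⟨y,w⟩|²`. -/
noncomputable def pseudoHypSq (y w : EuclideanSpace ℂ (Fin 2)) : ℝ :=
  1 - (1 - ‖y‖ ^ 2) * (1 - ‖w‖ ^ 2) / ‖(1 - (inner ℂ y w : ℂ))‖ ^ 2

/-!
Seen from the origin, `δ(0, w)² = ‖w‖²`, and `‖x₃(t)‖² = t²/4 + (2 - t²)/4 = 1/2` for every `t`.
For the third side, `⟨x₂, x₃(t)⟩ = (t/4) e^{iθ}`, so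
`|1 - ⟨x₂, x₃(t)⟩|² = 1 - (t/2) cos θ + t²/16`; the angle `θ(t)` is chosen exactly so that
`t cos θ = (t² + 7)/8`, which cancels the `t`-dependence and leaves `9/16`.
-/

open Complex ComplexConjugate

lemma pseudoHypSq_zero_left (w : EuclideanSpace ℂ (Fin 2)) : pseudoHypSq 0 w = ‖w‖ ^ 2 := by
  simp [pseudoHypSq]

lemma EuclideanSpace.norm_sq_pair (a b : ℂ) :
    ‖(WithLp.equiv 2 (Fin 2 → ℂ)).symm ![a, b]‖ ^ 2 = ‖a‖ ^ 2 + ‖b‖ ^ 2 := by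
  simp [EuclideanSpace.norm_sq_eq, Fin.sum_univ_two]

lemma EuclideanSpace.inner_pair (a b c d : ℂ) :
    inner ℂ ((WithLp.equiv 2 (Fin 2 → ℂ)).symm ![a, b]) ((WithLp.equiv 2 (Fin 2 → ℂ)).symm ![c, d])
      = conj a * c + conj b * d := by
  simp [PiLp.inner_apply, Fin.sum_univ_two, mul_comm]

lemma Complex.sq_norm_one_sub_mul_exp (r θ : ℝ) :
    ‖1 - r * exp (I * θ)‖ ^ 2 = 1 - 2 * r * Real.cos θ + r ^ 2 := by
  rw [mul_comm I, Complex.sq_norm, normSq_apply]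
  simp only [sub_re, sub_im, one_re, one_im, re_ofReal_mul, im_ofReal_mul,
    exp_ofReal_mul_I_re, exp_ofReal_mul_I_im]
  linear_combination r ^ 2 * Real.sin_sq_add_cos_sq θ

lemma cos_arccos_of_one_le_of_le_seven {t : ℝ} (h1 : 1 ≤ t) (h7 : t ≤ 7) :
    Real.cos (Real.arccos ((t ^ 2 + 7) / (8 * t))) = (t ^ 2 + 7) / (8 * t) := by
  have ht : 0 < 8 * t := by linarith
  apply Real.cos_arccos
  · rw [le_div_iff₀ ht]; nlinarith
  · rw [div_le_one ht]; nlinarith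

/-- For `t ∈ [1, √2]`, `θ(t) = arccos((t²+7)/(8t))`, and the points
`x₁ = (0,0)`, `x₂ = (1/2, 0)`, `x₃(t) = (t e^{iθ(t)}/2, √(2−t²)/2)` of `ℂ²`, one has
`δ(x₁,x₂) = 1/2`, `δ(x₁,x₃(t))² = 1/2`, `δ(x₂,x₃(t))² = 1/3`; in particular all three
pairwise pseudohyperbolic distances are independent of `t`. -/
theorem stmt_18 :
    ∀ t : ℝ, t ∈ Set.Icc 1 (Real.sqrt 2) →
      let θ : ℝ := Real.arccos ((t ^ 2 + 7) / (8 * t))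
      let x₁ : EuclideanSpace ℂ (Fin 2) := 0
      let x₂ : EuclideanSpace ℂ (Fin 2) :=
        (WithLp.equiv 2 (Fin 2 → ℂ)).symm ![(1 / 2 : ℂ), 0]
      let x₃ : EuclideanSpace ℂ (Fin 2) :=
        (WithLp.equiv 2 (Fin 2 → ℂ)).symm
          ![(t : ℂ) * Complex.exp (Complex.I * (θ : ℂ)) / 2,
            ((Real.sqrt (2 - t ^ 2) / 2 : ℝ) : ℂ)]
      Real.sqrt (pseudoHypSq x₁ x₂) = 1 / 2 ∧
        pseudoHypSq x₁ x₃ = 1 / 2 ∧ pseudoHypSq x₂ x₃ = 1 / 3 := by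
  rintro t ⟨ht1, ht2⟩ θ x₁ x₂ x₃
  have hsq : t ^ 2 ≤ 2 := by
    nlinarith [Real.sq_sqrt (zero_le_two : (0 : ℝ) ≤ 2), Real.sqrt_nonneg 2]
  have hcos : Real.cos θ = (t ^ 2 + 7) / (8 * t) :=
    cos_arccos_of_one_le_of_le_seven ht1 (by nlinarith)
  have hx₂ : ‖x₂‖ ^ 2 = (1 / 2) ^ 2 := by
    simp only [x₂, EuclideanSpace.norm_sq_pair]
    norm_num
  have hx₃ : ‖x₃‖ ^ 2 = 1 / 2 := by
    simp only [x₃, EuclideanSpace.norm_sq_pair, norm_div, norm_mul, norm_exp_I_mul_ofReal,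
      Complex.norm_real, Real.norm_eq_abs, sq_abs, div_pow, Real.sq_sqrt (sub_nonneg.2 hsq)]
    norm_num
    ring
  have hx₂x₃ : ‖1 - inner ℂ x₂ x₃‖ ^ 2 = 9 / 16 := by
    have hinner : inner ℂ x₂ x₃ = ((t / 4 : ℝ) : ℂ) * exp (I * θ) := by
      simp only [x₂, x₃, EuclideanSpace.inner_pair]
      push_cast
      simp only [map_div₀, map_one, map_ofNat, map_zero]
      ring
    rw [hinner, Complex.sq_norm_one_sub_mul_exp, hcos]
    field_simp
    ring
  refine ⟨?_, ?_, ?_⟩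
  · rw [pseudoHypSq_zero_left, hx₂, Real.sqrt_sq (by norm_num)]
  · rw [pseudoHypSq_zero_left, hx₃]
  · rw [pseudoHypSq, hx₂, hx₃, hx₂x₃]
    norm_num
end
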